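/- arXiv:1809.06135 — 4 statements merged into one kernel-verified Lean document; each statement's English description precedes it below -/
import Mathlib

section
/- Let F be a finite field of cardinality p^n (p prime), and let d be a proper divisor of n. If u ∈ F satisfies u^(p^d − 1) = 1 (i.e., u lies in the subfield of order p^d), then u^((p^n − 1)/Φ_n(p)) = 1, where Φ_n is the n-th cyclotomic polynomial. -/
open Polynomial

/-- `X ^ d - 1` and `Φ_n` are coprime factors of `X ^ n - 1` for a proper divisor `d` of `n`. -/
theorem Nat.cyclotomic_eval_toNat_mul_sub_one_dvd {x n d : ℕ} (hx : 1 < x)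
    (hd : d ∈ n.properDivisors) :
    ((cyclotomic n ℤ).eval (x : ℤ)).toNat * (x ^ d - 1) ∣ x ^ n - 1 := by
  have hΦ : 0 ≤ (cyclotomic n ℤ).eval (x : ℤ) := (cyclotomic_pos' n (by exact_mod_cast hx)).le
  have hdvd := eval_dvd (x := (x : ℤ)) (X_pow_sub_one_mul_cyclotomic_dvd_X_pow_sub_one_of_dvd ℤ hd)
  rw [← Int.natCast_dvd_natCast]
  push_cast [Nat.one_le_pow _ _ (by omega : 0 < x), Int.toNat_of_nonneg hΦ]
  simpa [mul_comm] using hdvd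

theorem subfield_elt_pow_cofactor_eq_one_general (p n d : ℕ) (hp : p.Prime)
    (hd : d ∣ n) (hdn : d < n)
    (F : Type*) [Field F]
    (u : F) (hu : u ^ (p ^ d - 1) = 1) :
    u ^ ((p ^ n - 1) / ((Polynomial.cyclotomic n ℤ).eval (p : ℤ)).toNat) = 1 := by
  have hdvd : p ^ d - 1 ∣ (p ^ n - 1) / ((cyclotomic n ℤ).eval (p : ℤ)).toNat :=
    Nat.dvd_div_of_mul_dvd <|
      Nat.cyclotomic_eval_toNat_mul_sub_one_dvd hp.one_lt (Nat.mem_properDivisors.mpr ⟨hd, hdn⟩)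
  obtain ⟨k, hk⟩ := hdvd
  rw [hk, pow_mul, hu, one_pow]

/-- If u lies in the subfield of order p^d of a finite field of order p^n,
then u^((p^n - 1)/Φ_n(p)) = 1. -/
theorem subfield_elt_pow_cofactor_eq_one (p n d : ℕ) (hp : p.Prime) (hn : 2 ≤ n)
    (hd : d ∣ n) (hd1 : 1 ≤ d) (hdn : d < n)
    (F : Type*) [Field F] [Fintype F] (hcard : Fintype.card F = p ^ n)
    (u : F) (hu : u ^ (p ^ d - 1) = 1) :
    u ^ ((p ^ n - 1) / ((Polynomial.cyclotomic n ℤ).eval (p : ℤ)).toNat) = 1 :=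
  subfield_elt_pow_cofactor_eq_one_general p n d hp hd hdn F u hu
end

section
/- Let F be a finite field of cardinality p^n (p prime, n ≥ 2), let ℓ be a prime dividing Φ_n(p) with ℓ not dividing n and ℓ ≠ p, let g be a generator of the multiplicative group F*, and let T, T' ∈ F* with T' = u·T where u lies in a proper subfield of F (u^(p^d − 1) = 1 for some proper divisor d of n). Then the discrete logarithms of T and T' to base g are congruent modulo ℓ, i.e., ℓ divides log_g T' − log_g T. -/
/-!
Write `u = g ^ (k' - k)`. Since `u ^ (p ^ d - 1) = 1`, the order `p ^ n - 1` of `g` divides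
`(k' - k) (p ^ d - 1)`. Reducing `Φ_n(p) ≡ 0` modulo `ℓ` shows, as `ℓ ∤ n`, that `p` has
multiplicative order exactly `n` modulo `ℓ`; so `ℓ ∣ p ^ n - 1` while `ℓ ∤ p ^ d - 1` for `0 < d < n`,
and `ℓ` must divide `k' - k`.
-/

open Polynomial

theorem Nat.dvd_pow_sub_one_iff_natCast_pow_eq_one {ℓ p : ℕ} (hp : 0 < p) (m : ℕ) :
    ℓ ∣ p ^ m - 1 ↔ (p : ZMod ℓ) ^ m = 1 := by
  rw [← Nat.modEq_iff_dvd' (Nat.one_le_pow m p hp), ← ZMod.natCast_eq_natCast_iff, Nat.cast_pow,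
    Nat.cast_one, eq_comm]

theorem ZMod.isPrimitiveRoot_of_dvd_cyclotomic_eval {ℓ n : ℕ} [Fact ℓ.Prime] {p : ℤ}
    (hℓn : ¬ ℓ ∣ n) (hℓΦ : (ℓ : ℤ) ∣ (cyclotomic n ℤ).eval p) :
    IsPrimitiveRoot (p : ZMod ℓ) n := by
  have : NeZero (n : ZMod ℓ) := NeZero.of_not_dvd (ZMod ℓ) hℓn
  refine isRoot_cyclotomic_iff.mp ?_
  rwa [IsRoot, ← map_cyclotomic_int, eval_map, eval₂_at_intCast, Int.coe_castRingHom,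
    ZMod.intCast_zmod_eq_zero_iff_dvd]

theorem natCast_dvd_of_zpow_eq_of_pow_eq_one {G : Type*} [Group G] {g u : G} {k : ℤ} {e ℓ : ℕ}
    (hℓ : ℓ.Prime) (hℓg : ℓ ∣ orderOf g) (hℓe : ¬ ℓ ∣ e) (hgu : g ^ k = u) (hu : u ^ e = 1) :
    (ℓ : ℤ) ∣ k := by
  have hord : (orderOf g : ℤ) ∣ k * e :=
    orderOf_dvd_iff_zpow_eq_one.mpr (by rw [zpow_mul, hgu, zpow_natCast, hu])
  have hℓke : (ℓ : ℤ) ∣ k * e := (Int.natCast_dvd_natCast.mpr hℓg).trans hord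
  exact ((Nat.prime_iff_prime_int.mp hℓ).dvd_mul.mp hℓke).resolve_right (by exact_mod_cast hℓe)

theorem log_eq_mod_ell_of_subfield_multiple_general (p n d : ℕ) (hp : p.Prime)
    (hd1 : 1 ≤ d) (hdn : d < n)
    (F : Type*) [Field F]
    (g : Fˣ) (hg : orderOf g = p ^ n - 1)
    (T T' u : Fˣ) (hu : u ^ (p ^ d - 1) = 1) (hT' : T' = u * T)
    (ℓ : ℕ) (hl : ℓ.Prime) (hlΦ : (ℓ : ℤ) ∣ (Polynomial.cyclotomic n ℤ).eval (p : ℤ))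
    (hln : ¬ ℓ ∣ n)
    (k k' : ℤ) (hk : g ^ k = T) (hk' : g ^ k' = T') :
    (ℓ : ℤ) ∣ k' - k := by
  have : Fact ℓ.Prime := ⟨hl⟩
  have hprim : IsPrimitiveRoot (p : ZMod ℓ) n := by
    exact_mod_cast ZMod.isPrimitiveRoot_of_dvd_cyclotomic_eval hln hlΦ
  refine natCast_dvd_of_zpow_eq_of_pow_eq_one (g := g) hl ?_ ?_ ?_ hu
  · rw [hg, Nat.dvd_pow_sub_one_iff_natCast_pow_eq_one hp.pos]
    exact hprim.pow_eq_one
  · rw [Nat.dvd_pow_sub_one_iff_natCast_pow_eq_one hp.pos, hprim.pow_eq_one_iff_dvd]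
    exact fun hnd => hdn.not_ge (Nat.le_of_dvd hd1 hnd)
  · rw [zpow_sub, hk, hk', hT']
    group

/-- Discrete logs of T and T' = u·T (u in a proper subfield) agree modulo a
prime ℓ dividing Φ_n(p) with ℓ ∤ n and ℓ ≠ p. -/
theorem log_eq_mod_ell_of_subfield_multiple (p n d : ℕ) (hp : p.Prime) (hn : 2 ≤ n)
    (hd : d ∣ n) (hd1 : 1 ≤ d) (hdn : d < n)
    (F : Type*) [Field F] [Fintype F] (hcard : Fintype.card F = p ^ n)
    (g : Fˣ) (hg : orderOf g = p ^ n - 1)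
    (T T' u : Fˣ) (hu : u ^ (p ^ d - 1) = 1) (hT' : T' = u * T)
    (ℓ : ℕ) (hl : ℓ.Prime) (hlΦ : (ℓ : ℤ) ∣ (Polynomial.cyclotomic n ℤ).eval (p : ℤ))
    (hln : ¬ ℓ ∣ n) (hlp : ℓ ≠ p)
    (k k' : ℤ) (hk : g ^ k = T) (hk' : g ^ k' = T') :
    (ℓ : ℤ) ∣ k' - k :=
  log_eq_mod_ell_of_subfield_multiple_general p n d hp hd1 hdn F g hg T T' u hu hT' ℓ hl hlΦ hln k
    k' hk hk'
end

section
/- Let F be a finite field of order p^n (p prime), with subfield K of order p^d where d ∣ n, 1 ≤ d < n. Let T ∈ F* not lie in any proper subfield of F. Viewing F as F_p[x]/(ψ(x)) for an irreducible monic ψ ∈ F_p[x] of degree n, there exists a nonzero element P = u·T with u ∈ K* such that, when P is written as a polynomial of degree < n in the class of x, its coefficients in degrees n − d + 1, …, n − 1 all vanish; that is, P is represented by a polynomial of degree at most n − d. -/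
/-!
Since `d ∣ n`, the field with `p ^ d` elements embeds in `F`; its image `K` is a `d`-dimensional
`𝔽_p`-subspace whose nonzero elements satisfy `u ^ (p ^ d - 1) = 1`. The classes of polynomials
of degree `≤ n - d` form a subspace `W` of dimension `n - d + 1`, so `u ↦ u * T` maps `K` into
`F ⧸ W`, of dimension `d - 1`, with a nonzero kernel.
-/

open Polynomial Module

theorem Submodule.exists_ne_zero_map_mem {K V W : Type*} [DivisionRing K]
    [AddCommGroup V] [Module K V] [AddCommGroup W] [Module K W] [FiniteDimensional K W]
    (U : Submodule K V) [FiniteDimensional K U] (f : V →ₗ[K] W) (S : Submodule K W)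
    (h : finrank K W < finrank K U + finrank K S) :
    ∃ u ∈ U, u ≠ 0 ∧ f u ∈ S := by
  have hquot : finrank K (W ⧸ S) < finrank K U := by
    have := S.finrank_quotient_add_finrank; omega
  obtain ⟨⟨u, hu⟩, hker, hu0⟩ := (Submodule.ne_bot_iff _).mp
    (LinearMap.ker_ne_bot_of_finrank_lt (f := S.mkQ ∘ₗ f ∘ₗ U.subtype) hquot)
  exact ⟨u, hu, by simpa using hu0, by simpa using hker⟩

theorem AdjoinRoot.finrank_map_degreeLT {k : Type*} [Field k] {ψ : k[X]} (hψ : ψ ≠ 0) {m : ℕ}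
    (hm : m ≤ ψ.natDegree) : finrank k ((degreeLT k m).map (AdjoinRoot.mkₐ ψ).toLinearMap) = m := by
  have hinj : Function.Injective ((AdjoinRoot.mkₐ ψ).toLinearMap ∘ₗ (degreeLT k m).subtype) := by
    rw [← LinearMap.ker_eq_bot, LinearMap.ker_eq_bot']
    rintro ⟨Q, hQ⟩ hmk
    have hdvd : ψ ∣ Q := AdjoinRoot.mk_eq_zero.mp hmk
    have hdeg : Q.degree < ψ.degree := by
      rw [degree_eq_natDegree hψ]; exact (mem_degreeLT.mp hQ).trans_le (by exact_mod_cast hm)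
    exact Subtype.ext (eq_zero_of_dvd_of_degree_lt hdvd hdeg)
  rw [← Submodule.range_subtype (degreeLT k m), ← LinearMap.range_comp,
    LinearMap.finrank_range_of_inj hinj, (degreeLTEquiv k m).finrank_eq, finrank_fin_fun]

theorem GaloisField.pow_sub_one_eq_one (p : ℕ) [Fact p.Prime] {d : ℕ} (hd : d ≠ 0)
    {v : GaloisField p d} (hv : v ≠ 0) : v ^ (p ^ d - 1) = 1 := by
  have := Fintype.ofFinite (GaloisField p d)
  rw [← GaloisField.card p d hd, ← Fintype.card_eq_nat_card]
  exact FiniteField.pow_card_sub_one_eq_one v hv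

open Polynomial in
theorem exists_low_degree_representative_general (p n d : ℕ) [Fact p.Prime]
    (hd : d ∣ n) (hd1 : 1 ≤ d) (hdn : d < n)
    (ψ : Polynomial (ZMod p)) (hirr : Irreducible ψ)
    (hdeg : ψ.natDegree = n)
    (T : AdjoinRoot ψ) :
    ∃ u : AdjoinRoot ψ, u ≠ 0 ∧ u ^ (p ^ d - 1) = 1 ∧
      ∃ Q : Polynomial (ZMod p), Q.natDegree ≤ n - d ∧ AdjoinRoot.mk ψ Q = u * T := by
  have := Fact.mk hirr
  have := (AdjoinRoot.powerBasis hirr.ne_zero).finite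
  have : Finite (AdjoinRoot ψ) := Module.finite_of_finite (ZMod p)
  have hfinrank : finrank (ZMod p) (AdjoinRoot ψ) = n :=
    (AdjoinRoot.powerBasis hirr.ne_zero).finrank.trans hdeg
  have hGF : finrank (ZMod p) (GaloisField p d) = d := GaloisField.finrank p (by omega)
  obtain ⟨φ⟩ := FiniteField.nonempty_algHom_of_finrank_dvd (F := ZMod p) (K := GaloisField p d)
    (L := AdjoinRoot ψ) (by rwa [hGF, hfinrank])
  obtain ⟨_, ⟨v, rfl⟩, hv0, hvT⟩ := (LinearMap.range φ.toLinearMap).exists_ne_zero_map_mem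
    (LinearMap.mulRight (ZMod p) T)
    ((degreeLT (ZMod p) (n - d + 1)).map (AdjoinRoot.mkₐ ψ).toLinearMap)
    (by rw [LinearMap.finrank_range_of_inj φ.injective, hGF, hfinrank,
      AdjoinRoot.finrank_map_degreeLT hirr.ne_zero (by omega)]; omega)
  obtain ⟨Q, hQ, hQv⟩ := Submodule.mem_map.mp hvT
  refine ⟨φ v, hv0, ?_, Q, ?_, hQv⟩
  · rw [← map_pow, GaloisField.pow_sub_one_eq_one p (by omega) (by simpa using hv0), map_one]
  · rw [degreeLT_succ_eq_degreeLE, mem_degreeLE] at hQ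
    exact natDegree_le_iff_degree_le.mpr hQ

/-- For T ∈ F_{p^n}^* not in a proper subfield, there is a nonzero u in the
subfield of order p^d such that u·T is represented by a polynomial of degree
at most n - d in F_p[x]/(ψ). -/
theorem exists_low_degree_representative (p n d : ℕ) [Fact p.Prime]
    (hd : d ∣ n) (hd1 : 1 ≤ d) (hdn : d < n)
    (ψ : Polynomial (ZMod p)) (hmonic : ψ.Monic) (hirr : Irreducible ψ)
    (hdeg : ψ.natDegree = n)
    (T : AdjoinRoot ψ) (hT : ∀ m, m ∣ n → m < n → T ^ p ^ m ≠ T) :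
    ∃ u : AdjoinRoot ψ, u ≠ 0 ∧ u ^ (p ^ d - 1) = 1 ∧
      ∃ Q : Polynomial (ZMod p), Q.natDegree ≤ n - d ∧ AdjoinRoot.mk ψ Q = u * T :=
  exists_low_degree_representative_general p n d hd hd1 hdn ψ hirr hdeg T
end

section
/- Let p be prime, n ≥ 2, and let g be a generator of the multiplicative group of F = GF(p^n). For T₀ ∈ F*, t ∈ ℤ, and P ∈ F* with P = u · g^t · T₀ for some u in a proper subfield of F (u^(p^d −1) = 1, d a proper divisor of n), and let ℓ be a prime divisor of Φ_n(p) with ℓ ∤ n. Then log_g P ≡ t + log_g T₀ (mod ℓ). -/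
/-!
Since `g ^ (kP - (t + k₀)) = u` and `u ^ (p ^ d - 1) = 1`, the order `p ^ n - 1` of `g` divides
`(kP - (t + k₀)) * (p ^ d - 1)`. As `ℓ ∣ Φ_n(p)` and `ℓ ∤ n`, the residue of `p` modulo `ℓ` is a
primitive `n`-th root of unity, so `ℓ` divides `p ^ n - 1` but not `p ^ d - 1`.
-/

open Polynomial

theorem isPrimitiveRoot_intCast_of_dvd_eval_cyclotomic {ℓ n : ℕ} [Fact ℓ.Prime] {a : ℤ}
    (hln : ¬ ℓ ∣ n) (hℓ : (ℓ : ℤ) ∣ (cyclotomic n ℤ).eval a) :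
    IsPrimitiveRoot (a : ZMod ℓ) n := by
  have : NeZero (n : ZMod ℓ) := ⟨by rwa [Ne, ZMod.natCast_eq_zero_iff]⟩
  rwa [← isRoot_cyclotomic_iff, IsRoot.def, ← map_cyclotomic_int, eval_intCast_map, eq_intCast,
    ZMod.intCast_zmod_eq_zero_iff_dvd]

theorem IsPrimitiveRoot.dvd_pow_sub_one_iff {ℓ n a : ℕ} (ha : 0 < a)
    (hζ : IsPrimitiveRoot (a : ZMod ℓ) n) (d : ℕ) : ℓ ∣ a ^ d - 1 ↔ n ∣ d := by
  rw [← hζ.pow_eq_one_iff_dvd, ← ZMod.natCast_eq_zero_iff, Nat.cast_sub (Nat.one_le_pow _ _ ha),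
    sub_eq_zero, Nat.cast_pow, Nat.cast_one]

theorem Nat.Prime.dvd_of_zpow_pow_eq_one {G : Type*} [Group G] {g : G} {m : ℤ} {e ℓ : ℕ}
    (hℓ : ℓ.Prime) (hℓg : ℓ ∣ orderOf g) (hℓe : ¬ ℓ ∣ e) (h : (g ^ m) ^ e = 1) :
    (ℓ : ℤ) ∣ m := by
  rw [← zpow_natCast, ← zpow_mul, ← orderOf_dvd_iff_zpow_eq_one] at h
  have := (Int.natCast_dvd_natCast.mpr hℓg).trans h
  exact (Int.Prime.dvd_mul' hℓ this).resolve_right (by exact_mod_cast hℓe)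

theorem initial_splitting_log_general (p n d : ℕ) (hp : p.Prime)
    (hd1 : 1 ≤ d) (hdn : d < n)
    (F : Type*) [Field F]
    (g : Fˣ) (hg : orderOf g = p ^ n - 1)
    (T₀ P u : Fˣ) (t : ℤ) (hu : u ^ (p ^ d - 1) = 1) (hP : P = u * g ^ t * T₀)
    (ℓ : ℕ) (hl : ℓ.Prime) (hlΦ : (ℓ : ℤ) ∣ (Polynomial.cyclotomic n ℤ).eval (p : ℤ))
    (hln : ¬ ℓ ∣ n)
    (k₀ kP : ℤ) (hk₀ : g ^ k₀ = T₀) (hkP : g ^ kP = P) :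
    (ℓ : ℤ) ∣ kP - (t + k₀) := by
  have : Fact ℓ.Prime := ⟨hl⟩
  have hprim : IsPrimitiveRoot (p : ZMod ℓ) n := by
    simpa using isPrimitiveRoot_intCast_of_dvd_eval_cyclotomic hln hlΦ
  have hℓg : ℓ ∣ orderOf g := by
    rw [hg, hprim.dvd_pow_sub_one_iff hp.pos]
  have hℓu : ¬ ℓ ∣ p ^ d - 1 := by
    rw [hprim.dvd_pow_sub_one_iff hp.pos]
    exact Nat.not_dvd_of_pos_of_lt hd1 hdn
  have hgu : g ^ (kP - (t + k₀)) = u := by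
    rw [zpow_sub, zpow_add, hkP, hP, hk₀]
    group
  exact hl.dvd_of_zpow_pow_eq_one hℓg hℓu (hgu ▸ hu)

/-- Correctness of the initial splitting: if P = u · g^t · T₀ with u in a proper
subfield, then log_g P ≡ t + log_g T₀ (mod ℓ) for ℓ a prime dividing Φ_n(p), ℓ ∤ n. -/
theorem initial_splitting_log (p n d : ℕ) (hp : p.Prime) (hn : 2 ≤ n)
    (hd : d ∣ n) (hd1 : 1 ≤ d) (hdn : d < n)
    (F : Type*) [Field F] [Fintype F] (hcard : Fintype.card F = p ^ n)
    (g : Fˣ) (hg : orderOf g = p ^ n - 1)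
    (T₀ P u : Fˣ) (t : ℤ) (hu : u ^ (p ^ d - 1) = 1) (hP : P = u * g ^ t * T₀)
    (ℓ : ℕ) (hl : ℓ.Prime) (hlΦ : (ℓ : ℤ) ∣ (Polynomial.cyclotomic n ℤ).eval (p : ℤ))
    (hln : ¬ ℓ ∣ n)
    (k₀ kP : ℤ) (hk₀ : g ^ k₀ = T₀) (hkP : g ^ kP = P) :
    (ℓ : ℤ) ∣ kP - (t + k₀) :=
  initial_splitting_log_general p n d hp hd1 hdn F g hg T₀ P u t hu hP ℓ hl hlΦ hln k₀ kP hk₀ hkP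
end
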